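/- arXiv:1102.1104 — 6 statements merged into one kernel-verified Lean document; each statement's English description precedes it below -/
import Mathlib

section
/- Fix N = 1 and α_Q, α_M, γ, λ_b, λ_s > 0. Then the system λ_b = (α_Q+α_M)x + γ min(x,y) and λ_s = (α_Q+α_M)y + γ min(x,y) has a unique solution (x, y) with x > 0 and y > 0. Moreover x > y if and only if λ_b > λ_s. -/
/-!
Taking the `min` of the two balance equations gives `min λ_b λ_s = (a + γ) · min x y` with
`a = α_Q + α_M`, because `t ↦ a t + γ c` is monotone. So `min x y` is determined by the data, and
then each balance equation is linear in its own unknown. Subtracting them gives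
`λ_b - λ_s = a (x - y)`, which settles the ordering.
-/

section Balance

variable {a γ l₁ l₂ x y : ℝ}

theorem min_eq_mul_min_of_balance (ha : 0 ≤ a) (h₁ : l₁ = a * x + γ * min x y)
    (h₂ : l₂ = a * y + γ * min x y) : min l₁ l₂ = (a + γ) * min x y := by
  rw [h₁, h₂, min_add_add_right, ← mul_min_of_nonneg _ _ ha]
  ring

theorem lt_iff_lt_of_balance (ha : 0 < a) (h₁ : l₁ = a * x + γ * min x y)
    (h₂ : l₂ = a * y + γ * min x y) : y < x ↔ l₂ < l₁ := by
  have hsub : l₁ - l₂ = a * (x - y) := by rw [h₁, h₂]; ring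
  rw [← sub_pos, ← sub_pos (a := l₁), hsub, mul_pos_iff_of_pos_left ha]

noncomputable def balanceSolution (a γ l₁ l₂ : ℝ) : ℝ × ℝ :=
  ((l₁ - γ * (min l₁ l₂ / (a + γ))) / a, (l₂ - γ * (min l₁ l₂ / (a + γ))) / a)

theorem eq_balanceSolution (ha : 0 < a) (haγ : a + γ ≠ 0) (h₁ : l₁ = a * x + γ * min x y)
    (h₂ : l₂ = a * y + γ * min x y) : (x, y) = balanceSolution a γ l₁ l₂ := by
  have hmin : min l₁ l₂ / (a + γ) = min x y := by
    rw [min_eq_mul_min_of_balance ha.le h₁ h₂, mul_div_cancel_left₀ _ haγ]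
  simp only [balanceSolution, hmin, Prod.mk.injEq]
  constructor <;> field_simp <;> linarith

theorem min_balanceSolution (ha : 0 < a) (haγ : a + γ ≠ 0) :
    min (balanceSolution a γ l₁ l₂).1 (balanceSolution a γ l₁ l₂).2 = min l₁ l₂ / (a + γ) := by
  rw [balanceSolution, min_div_div_right ha.le, min_sub_sub_right]
  field_simp
  ring

theorem balanceSolution_balance (ha : 0 < a) (haγ : a + γ ≠ 0) :
    l₁ = a * (balanceSolution a γ l₁ l₂).1 +
        γ * min (balanceSolution a γ l₁ l₂).1 (balanceSolution a γ l₁ l₂).2 ∧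
      l₂ = a * (balanceSolution a γ l₁ l₂).2 +
        γ * min (balanceSolution a γ l₁ l₂).1 (balanceSolution a γ l₁ l₂).2 := by
  rw [min_balanceSolution ha haγ, balanceSolution]
  constructor <;> field_simp <;> ring

theorem balanceSolution_pos (ha : 0 < a) (haγ : 0 < a + γ) (hl₁ : 0 < l₁) (hl₂ : 0 < l₂) :
    0 < (balanceSolution a γ l₁ l₂).1 ∧ 0 < (balanceSolution a γ l₁ l₂).2 := by
  set m := min l₁ l₂ / (a + γ)
  have hm : 0 < m := div_pos (lt_min hl₁ hl₂) haγ
  have hmin : (a + γ) * m = min l₁ l₂ := mul_div_cancel₀ _ haγ.ne'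
  have ham : 0 < a * m := mul_pos ha hm
  constructor
  · exact div_pos (by nlinarith [min_le_left l₁ l₂]) ha
  · exact div_pos (by nlinarith [min_le_right l₁ l₂]) ha

end Balance

theorem stmt_4 (αQ αM γ lb ls : ℝ)
    (hαQ : 0 < αQ) (hαM : 0 < αM) (hγ : 0 < γ) (hlb : 0 < lb) (hls : 0 < ls) :
    (∃! p : ℝ × ℝ, 0 < p.1 ∧ 0 < p.2 ∧
      lb = (αQ + αM) * p.1 + γ * min p.1 p.2 ∧
      ls = (αQ + αM) * p.2 + γ * min p.1 p.2) ∧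
    (∀ x y : ℝ, 0 < x → 0 < y →
      lb = (αQ + αM) * x + γ * min x y →
      ls = (αQ + αM) * y + γ * min x y →
      (y < x ↔ ls < lb)) := by
  have ha : 0 < αQ + αM := add_pos hαQ hαM
  have haγ : 0 < αQ + αM + γ := add_pos ha hγ
  obtain ⟨hx, hy⟩ := balanceSolution_pos ha haγ hlb hls
  obtain ⟨h₁, h₂⟩ := balanceSolution_balance (l₁ := lb) (l₂ := ls) ha haγ.ne'
  refine ⟨⟨balanceSolution (αQ + αM) γ lb ls, ⟨hx, hy, h₁, h₂⟩, ?_⟩, ?_⟩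
  · rintro p ⟨-, -, hp₁, hp₂⟩
    exact eq_balanceSolution ha haγ.ne' hp₁ hp₂
  · intro x y _ _ hx₁ hy₂
    exact lt_iff_lt_of_balance ha hx₁ hy₂
end

section
/- Let α_Q, α_M, γ, λ_b, λ_s > 0. Suppose (x, y) and (x', y') are two solutions in the positive orthant of the fixed-point system (6): λ_b = (α_Q+α_M)x_1 + γ min(x_1,y_1); α_M x_{i-1} = (α_Q+α_M)x_i + γ min(x_i,y_i) for 1 < i ≤ N; α_M y_{i+1} = (α_Q+α_M)y_i + γ min(x_i,y_i) for 1 ≤ i < N; λ_s = (α_Q+α_M)y_N + γ min(x_N,y_N). Then (x, y) = (x', y'). -/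
/-!
The differences `u = x' - x`, `w = y' - y` and `m` of the minima satisfy a linear system in
which `m ≤ 0` whenever `u, w < 0`. If `w 1 < 0`, the quantity
`Φ k = (αQ + αM) w k + γ m k + αM u k` starts at `αM w 1 + αQ (w 1 - u 1)` and changes by
`αQ (w (k+1) - u (k+1))`, so by induction `u ≥ 0`, `w < 0` and `Φ < 0` at every level; but the
ask-side boundary condition makes `Φ N = αM u N ≥ 0`. Hence `y 1 = y' 1` by symmetry, and
strict monotonicity of `t ↦ (αQ + αM) t + γ min t s` propagates equality level by level.
-/

structure IsLOBFixedPoint (N : ℕ) (αQ αM γ lb ls : ℝ) (x y : ℕ → ℝ) : Prop where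
  bid_first : lb = (αQ + αM) * x 1 + γ * min (x 1) (y 1)
  bid_succ : ∀ i, 2 ≤ i → i ≤ N →
    αM * x (i - 1) = (αQ + αM) * x i + γ * min (x i) (y i)
  ask_succ : ∀ i, 1 ≤ i → i < N →
    αM * y (i + 1) = (αQ + αM) * y i + γ * min (x i) (y i)
  ask_last : ls = (αQ + αM) * y N + γ * min (x N) (y N)

lemma strictMono_mul_add_mul_min {c γ : ℝ} (hc : 0 < c) (hγ : 0 ≤ γ) (s : ℝ) :
    StrictMono fun t => c * t + γ * min t s := fun _ _ hab =>
  add_lt_add_of_lt_of_le (mul_lt_mul_of_pos_left hab hc)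
    (mul_le_mul_of_nonneg_left (min_le_min_right s hab.le) hγ)

lemma nonneg_of_linearized_lob {N : ℕ} (hN : 1 ≤ N) {αQ αM γ : ℝ}
    (hαQ : 0 ≤ αQ) (hαM : 0 < αM) (hγ : 0 ≤ γ) {u w m : ℕ → ℝ}
    (hm : ∀ i, u i < 0 → w i < 0 → m i ≤ 0)
    (h1 : (αQ + αM) * u 1 + γ * m 1 = 0)
    (h2 : ∀ i, 1 ≤ i → i < N → αM * u i = (αQ + αM) * u (i + 1) + γ * m (i + 1))
    (h3 : ∀ i, 1 ≤ i → i < N → αM * w (i + 1) = (αQ + αM) * w i + γ * m i)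
    (h4 : (αQ + αM) * w N + γ * m N = 0) :
    0 ≤ w 1 := by
  by_contra! hw1
  have u_nonneg : ∀ i, w i < 0 → 0 ≤ (αQ + αM) * u i + γ * m i → 0 ≤ u i := by
    intro i hwi hflux
    by_contra! hui
    nlinarith [mul_nonpos_of_nonneg_of_nonpos hγ (hm i hui hwi)]
  have hu1 : 0 ≤ u 1 := u_nonneg 1 hw1 h1.ge
  have invariant : ∀ k, 1 ≤ k → k ≤ N →
      0 ≤ u k ∧ w k < 0 ∧ (αQ + αM) * w k + γ * m k + αM * u k < 0 := by
    intro k hk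
    induction k, hk using Nat.le_induction with
    | base => exact fun _ => ⟨hu1, hw1, by nlinarith⟩
    | succ k hk ih =>
      intro hkN
      obtain ⟨huk, hwk, hΦk⟩ := ih (by omega)
      have hx := h2 k hk hkN
      have hy := h3 k hk hkN
      have hwk' : w (k + 1) < 0 := by nlinarith
      have huk' : 0 ≤ u (k + 1) := u_nonneg (k + 1) hwk' (by nlinarith)
      exact ⟨huk', hwk', by nlinarith⟩
  obtain ⟨huN, -, hΦN⟩ := invariant N hN le_rfl
  nlinarith

namespace IsLOBFixedPoint

variable {N : ℕ} {αQ αM γ lb ls : ℝ} {x y x' y' : ℕ → ℝ}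

lemma bid_step (hs : IsLOBFixedPoint N αQ αM γ lb ls x y) {i : ℕ} (hi : 1 ≤ i)
    (hiN : i < N) :
    αM * x i = (αQ + αM) * x (i + 1) + γ * min (x (i + 1)) (y (i + 1)) := by
  simpa using hs.bid_succ (i + 1) (by omega) hiN

lemma y_one_le (hN : 1 ≤ N) (hαQ : 0 ≤ αQ) (hαM : 0 < αM) (hγ : 0 ≤ γ)
    (hs : IsLOBFixedPoint N αQ αM γ lb ls x y) (hs' : IsLOBFixedPoint N αQ αM γ lb ls x' y') :
    y 1 ≤ y' 1 :=
  sub_nonneg.mp <|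
    nonneg_of_linearized_lob (u := fun i => x' i - x i) (w := fun i => y' i - y i)
      (m := fun i => min (x' i) (y' i) - min (x i) (y i))
      hN hαQ hαM hγ
      (fun i hu hw => sub_nonpos.mpr (min_le_min (sub_neg.mp hu).le (sub_neg.mp hw).le))
      (by linear_combination hs.bid_first - hs'.bid_first)
      (fun i hi hiN => by linear_combination hs'.bid_step hi hiN - hs.bid_step hi hiN)
      (fun i hi hiN => by linear_combination hs'.ask_succ i hi hiN - hs.ask_succ i hi hiN)
      (by linear_combination hs.ask_last - hs'.ask_last)

lemma eq_of_eq_one (hc : 0 < αQ + αM) (hαM : αM ≠ 0) (hγ : 0 ≤ γ)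
    (hs : IsLOBFixedPoint N αQ αM γ lb ls x y) (hs' : IsLOBFixedPoint N αQ αM γ lb ls x' y')
    (hx1 : x 1 = x' 1) (hy1 : y 1 = y' 1) :
    ∀ i, 1 ≤ i → i ≤ N → x i = x' i ∧ y i = y' i := by
  intro i hi
  induction i, hi using Nat.le_induction with
  | base => exact fun _ => ⟨hx1, hy1⟩
  | succ i hi ih =>
    intro hiN
    obtain ⟨hxi, hyi⟩ := ih (by omega)
    have hy : y (i + 1) = y' (i + 1) := mul_left_cancel₀ hαM <| by
      rw [hs.ask_succ i hi hiN, hs'.ask_succ i hi hiN, hxi, hyi]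
    have hx : x (i + 1) = x' (i + 1) :=
      (strictMono_mul_add_mul_min hc hγ (y (i + 1))).injective <| by
        rw [← hs.bid_step hi hiN, hy, ← hs'.bid_step hi hiN, hxi]
    exact ⟨hx, hy⟩

end IsLOBFixedPoint

theorem stmt_8_general (N : ℕ) (αQ αM γ lb ls : ℝ)
    (hαQ : 0 < αQ) (hαM : 0 < αM) (hγ : 0 < γ)
    (x y x' y' : ℕ → ℝ)
    (h1 : lb = (αQ + αM) * x 1 + γ * min (x 1) (y 1))
    (h2 : ∀ i, 2 ≤ i → i ≤ N →
      αM * x (i - 1) = (αQ + αM) * x i + γ * min (x i) (y i))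
    (h3 : ∀ i, 1 ≤ i → i < N →
      αM * y (i + 1) = (αQ + αM) * y i + γ * min (x i) (y i))
    (h4 : ls = (αQ + αM) * y N + γ * min (x N) (y N))
    (h1' : lb = (αQ + αM) * x' 1 + γ * min (x' 1) (y' 1))
    (h2' : ∀ i, 2 ≤ i → i ≤ N →
      αM * x' (i - 1) = (αQ + αM) * x' i + γ * min (x' i) (y' i))
    (h3' : ∀ i, 1 ≤ i → i < N →
      αM * y' (i + 1) = (αQ + αM) * y' i + γ * min (x' i) (y' i))
    (h4' : ls = (αQ + αM) * y' N + γ * min (x' N) (y' N)) :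
    ∀ i, 1 ≤ i → i ≤ N → x i = x' i ∧ y i = y' i := by
  intro i hi hiN
  have hN : 1 ≤ N := hi.trans hiN
  have hs : IsLOBFixedPoint N αQ αM γ lb ls x y := ⟨h1, h2, h3, h4⟩
  have hs' : IsLOBFixedPoint N αQ αM γ lb ls x' y' := ⟨h1', h2', h3', h4'⟩
  have hc : 0 < αQ + αM := add_pos hαQ hαM
  have hy1 : y 1 = y' 1 :=
    le_antisymm (hs.y_one_le hN hαQ.le hαM hγ.le hs') (hs'.y_one_le hN hαQ.le hαM hγ.le hs)
  have hx1 : x 1 = x' 1 := (strictMono_mul_add_mul_min hc hγ.le (y 1)).injective <| by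
    rw [← h1, hy1, ← h1']
  exact hs.eq_of_eq_one hc hαM.ne' hγ.le hs' hx1 hy1 i hi hiN

theorem stmt_8 (N : ℕ) (hN : 1 ≤ N) (αQ αM γ lb ls : ℝ)
    (hαQ : 0 < αQ) (hαM : 0 < αM) (hγ : 0 < γ) (hlb : 0 < lb) (hls : 0 < ls)
    (x y x' y' : ℕ → ℝ)
    (hx : ∀ i, 1 ≤ i → i ≤ N → 0 < x i) (hy : ∀ i, 1 ≤ i → i ≤ N → 0 < y i)
    (hx' : ∀ i, 1 ≤ i → i ≤ N → 0 < x' i) (hy' : ∀ i, 1 ≤ i → i ≤ N → 0 < y' i)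
    (h1 : lb = (αQ + αM) * x 1 + γ * min (x 1) (y 1))
    (h2 : ∀ i, 2 ≤ i → i ≤ N →
      αM * x (i - 1) = (αQ + αM) * x i + γ * min (x i) (y i))
    (h3 : ∀ i, 1 ≤ i → i < N →
      αM * y (i + 1) = (αQ + αM) * y i + γ * min (x i) (y i))
    (h4 : ls = (αQ + αM) * y N + γ * min (x N) (y N))
    (h1' : lb = (αQ + αM) * x' 1 + γ * min (x' 1) (y' 1))
    (h2' : ∀ i, 2 ≤ i → i ≤ N →
      αM * x' (i - 1) = (αQ + αM) * x' i + γ * min (x' i) (y' i))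
    (h3' : ∀ i, 1 ≤ i → i < N →
      αM * y' (i + 1) = (αQ + αM) * y' i + γ * min (x' i) (y' i))
    (h4' : ls = (αQ + αM) * y' N + γ * min (x' N) (y' N)) :
    ∀ i, 1 ≤ i → i ≤ N → x i = x' i ∧ y i = y' i :=
  stmt_8_general N αQ αM γ lb ls hαQ hαM hγ x y x' y' h1 h2 h3 h4 h1' h2' h3' h4'
end

section
/- In the setting of the iterative scheme of Lemma 5 (with α_Q, α_M, γ, λ_b, λ_s > 0), the sequences (x^{(k)}_i)_k are nondecreasing and bounded above (by (α_M/(α_Q+α_M))^{i-1} λ_b/(α_Q+α_M)) and the sequences (y^{(k)}_i)_k are nonincreasing and bounded below by 0; hence both converge as k → ∞, and the limits (x^∞, y^∞) satisfy the fixed-point system (6). -/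
/-!
With `a = α_Q + α_M` and `b = α_M`, every equation of the scheme reads
`(driving term) = a * t + γ * min t c` for the unknown `t` and the frozen `c`. The right-hand
side is strictly increasing in `t` and antitone in `c`, so the forward x-sweep is antitone in
the frozen `y` and the backward y-sweep is antitone in the frozen `x`. Starting from `x⁰ = 0`,
induction on `k` makes `x^(k)` nondecreasing and `y^(k)` nonincreasing. Positive data keep
both nonnegative, so `a * x_i ≤ b * x_(i-1)`, which is the geometric bound. The monotone
bounded sequences converge, and the equations pass to the limit because `min` is continuous.
-/

open Filter Topology

section Sweeps

variable {N : ℕ} {a b γ l : ℝ}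

lemma nonneg_of_add_mul_min_nonneg {t c : ℝ} (ha : 0 < a) (hγ : 0 ≤ γ)
    (h : 0 ≤ a * t + γ * min t c) : 0 ≤ t := by
  by_contra! ht
  nlinarith [mul_le_mul_of_nonneg_left (min_le_left t c) hγ]

lemma le_of_add_mul_min_le {t t' c c' : ℝ} (ha : 0 < a) (hγ : 0 ≤ γ) (hc : c' ≤ c)
    (h : a * t + γ * min t c ≤ a * t' + γ * min t' c') : t ≤ t' := by
  by_contra! ht
  nlinarith [mul_le_mul_of_nonneg_left (min_le_min ht.le hc) hγ]

def IsXSweep (N : ℕ) (a b γ l : ℝ) (y x : ℕ → ℝ) : Prop :=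
  l = a * x 1 + γ * min (x 1) (y 1) ∧
    ∀ i, 2 ≤ i → i ≤ N → b * x (i - 1) = a * x i + γ * min (x i) (y i)

def IsYSweep (N : ℕ) (a b γ l : ℝ) (x y : ℕ → ℝ) : Prop :=
  (∀ i, 1 ≤ i → i < N → b * y (i + 1) = a * y i + γ * min (x i) (y i)) ∧
    l = a * y N + γ * min (x N) (y N)

namespace IsXSweep

variable {x x' y y' : ℕ → ℝ}

lemma step (h : IsXSweep N a b γ l y x) {i : ℕ} (hi : 1 ≤ i) (hiN : i + 1 ≤ N) :
    b * x i = a * x (i + 1) + γ * min (x (i + 1)) (y (i + 1)) :=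
  h.2 (i + 1) (by omega) hiN

lemma nonneg (h : IsXSweep N a b γ l y x) (ha : 0 < a) (hb : 0 ≤ b) (hγ : 0 ≤ γ)
    (hl : 0 ≤ l) : ∀ i, 1 ≤ i → i ≤ N → 0 ≤ x i := by
  intro i hi
  induction i, hi using Nat.le_induction with
  | base => exact fun _ ↦ nonneg_of_add_mul_min_nonneg ha hγ (h.1 ▸ hl)
  | succ i hi ih =>
    intro hiN
    exact nonneg_of_add_mul_min_nonneg ha hγ (h.step hi hiN ▸ mul_nonneg hb (ih (by omega)))

lemma mono (h : IsXSweep N a b γ l y x) (h' : IsXSweep N a b γ l y' x') (ha : 0 < a)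
    (hb : 0 ≤ b) (hγ : 0 ≤ γ) (hy : ∀ i, 1 ≤ i → i ≤ N → y' i ≤ y i) :
    ∀ i, 1 ≤ i → i ≤ N → x i ≤ x' i := by
  intro i hi
  induction i, hi using Nat.le_induction with
  | base => exact fun hN ↦ le_of_add_mul_min_le ha hγ (hy 1 le_rfl hN) (h.1 ▸ h'.1).le
  | succ i hi ih =>
    intro hiN
    refine le_of_add_mul_min_le ha hγ (hy _ (by omega) hiN) ?_
    rw [← h.step hi hiN, ← h'.step hi hiN]
    exact mul_le_mul_of_nonneg_left (ih (by omega)) hb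

lemma le_geom (h : IsXSweep N a b γ l y x) (ha : 0 < a) (hb : 0 ≤ b) (hγ : 0 ≤ γ)
    (hx : ∀ i, 1 ≤ i → i ≤ N → 0 ≤ x i) (hy : ∀ i, 1 ≤ i → i ≤ N → 0 ≤ y i) :
    ∀ i, 1 ≤ i → i ≤ N → x i ≤ (b / a) ^ (i - 1) * (l / a) := by
  have hmin : ∀ i, 1 ≤ i → i ≤ N → 0 ≤ γ * min (x i) (y i) := fun i hi hiN ↦
    mul_nonneg hγ (le_min (hx i hi hiN) (hy i hi hiN))
  intro i hi
  induction i, hi using Nat.le_induction with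
  | base =>
    intro hN
    rw [pow_zero, one_mul, le_div_iff₀ ha, mul_comm, h.1]
    linarith [hmin 1 le_rfl hN]
  | succ i hi ih =>
    intro hiN
    have hstep : x (i + 1) ≤ b / a * x i := by
      rw [div_mul_eq_mul_div, le_div_iff₀ ha, mul_comm, h.step hi hiN]
      linarith [hmin (i + 1) (by omega) hiN]
    calc x (i + 1) ≤ b / a * ((b / a) ^ (i - 1) * (l / a)) :=
          hstep.trans (mul_le_mul_of_nonneg_left (ih (by omega)) (by positivity))
      _ = (b / a) ^ (i + 1 - 1) * (l / a) := by
          rw [← mul_assoc, ← pow_succ', Nat.sub_add_cancel hi, Nat.add_sub_cancel]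

end IsXSweep

namespace IsYSweep

variable {x x' y y' : ℕ → ℝ}

lemma nonneg (h : IsYSweep N a b γ l x y) (ha : 0 < a) (hb : 0 ≤ b) (hγ : 0 ≤ γ)
    (hl : 0 ≤ l) : ∀ i, 1 ≤ i → i ≤ N → 0 ≤ y i := by
  intro i hi hiN
  induction hiN using Nat.decreasingInduction with
  | self => exact nonneg_of_add_mul_min_nonneg ha hγ (min_comm (x N) (y N) ▸ h.2 ▸ hl)
  | of_succ i hiN ih =>
    refine nonneg_of_add_mul_min_nonneg (c := x i) ha hγ ?_
    rw [min_comm, ← h.1 i hi hiN]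
    exact mul_nonneg hb (ih (by omega))

lemma anti (h : IsYSweep N a b γ l x y) (h' : IsYSweep N a b γ l x' y') (ha : 0 < a)
    (hb : 0 ≤ b) (hγ : 0 ≤ γ) (hx : ∀ i, 1 ≤ i → i ≤ N → x i ≤ x' i) :
    ∀ i, 1 ≤ i → i ≤ N → y' i ≤ y i := by
  intro i hi hiN
  induction hiN using Nat.decreasingInduction with
  | self =>
    refine le_of_add_mul_min_le ha hγ (hx N hi le_rfl) ?_
    rw [min_comm, min_comm (y N), ← h.2, ← h'.2]
  | of_succ i hiN ih =>
    refine le_of_add_mul_min_le ha hγ (hx i hi hiN.le) ?_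
    rw [min_comm, min_comm (y i), ← h.1 i hi hiN, ← h'.1 i hi hiN]
    exact mul_le_mul_of_nonneg_left (ih (by omega)) hb

end IsYSweep

lemma isYSweep_of_eq_zero {x y : ℕ → ℝ} (hN : 1 ≤ N) (ha : 0 < a) (hb : 0 ≤ b) (hl : 0 ≤ l)
    (hx : ∀ i, 1 ≤ i → i ≤ N → x i = 0) (hyN : y N = l / a)
    (hy : ∀ i, 1 ≤ i → i < N → b * y (i + 1) = a * y i) : IsYSweep N a b γ l x y := by
  have hlin : IsYSweep N a b 0 l x y :=
    ⟨fun i hi hiN ↦ by simpa using hy i hi hiN, by rw [hyN]; field_simp; ring⟩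
  have hmin : ∀ i, 1 ≤ i → i ≤ N → min (x i) (y i) = 0 := fun i hi hiN ↦ by
    rw [hx i hi hiN, min_eq_left (hlin.nonneg ha hb le_rfl hl i hi hiN)]
  refine ⟨fun i hi hiN ↦ ?_, ?_⟩
  · rw [hmin i hi hiN.le, hy i hi hiN]; ring
  · rw [hmin N hN le_rfl, hyN]; field_simp; ring

lemma eq_add_mul_min_of_tendsto {a γ u₀ t₀ c₀ d₀ : ℝ} {u t c d : ℕ → ℝ}
    (hu : Tendsto u atTop (𝓝 u₀)) (ht : Tendsto t atTop (𝓝 t₀))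
    (hc : Tendsto c atTop (𝓝 c₀)) (hd : Tendsto d atTop (𝓝 d₀))
    (h : ∀ k, u k = a * t k + γ * min (c k) (d k)) : u₀ = a * t₀ + γ * min c₀ d₀ :=
  tendsto_nhds_unique hu <| (tendsto_congr h).mpr <|
    (tendsto_const_nhds.mul ht).add (tendsto_const_nhds.mul (hc.min hd))

section Limits

variable {x y : ℕ → ℕ → ℝ} {x' y' : ℕ → ℝ} (hN : 1 ≤ N)
  (hx : ∀ i, 1 ≤ i → i ≤ N → Tendsto (x · i) atTop (𝓝 (x' i)))
  (hy : ∀ i, 1 ≤ i → i ≤ N → Tendsto (y · i) atTop (𝓝 (y' i)))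
include hN hx hy

lemma IsXSweep.of_tendsto (h : ∀ k, IsXSweep N a b γ l (y k) (x k)) :
    IsXSweep N a b γ l y' x' := by
  refine ⟨?_, fun i hi hiN ↦ ?_⟩
  · have hx1 := hx 1 le_rfl hN
    exact eq_add_mul_min_of_tendsto tendsto_const_nhds hx1 hx1 (hy 1 le_rfl hN) fun k ↦ (h k).1
  · have hxi := hx i (by omega) hiN
    exact eq_add_mul_min_of_tendsto (tendsto_const_nhds.mul (hx (i - 1) (by omega) (by omega)))
      hxi hxi (hy i (by omega) hiN) fun k ↦ (h k).2 i hi hiN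

lemma IsYSweep.of_tendsto (h : ∀ k, IsYSweep N a b γ l (x k) (y k)) :
    IsYSweep N a b γ l x' y' := by
  refine ⟨fun i hi hiN ↦ ?_, ?_⟩
  · have hyi := hy i hi hiN.le
    exact eq_add_mul_min_of_tendsto (tendsto_const_nhds.mul (hy (i + 1) (by omega) hiN))
      hyi (hx i hi hiN.le) hyi fun k ↦ (h k).1 i hi hiN
  · have hyN := hy N hN le_rfl
    exact eq_add_mul_min_of_tendsto tendsto_const_nhds hyN (hx N hN le_rfl) hyN fun k ↦ (h k).2

end Limits

section Iterates

variable {x y : ℕ → ℕ → ℝ} {lb ls : ℝ}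

lemma sweep_iterates_mono (ha : 0 < a) (hb : 0 ≤ b) (hγ : 0 ≤ γ)
    (hX : ∀ k, IsXSweep N a b γ lb (y k) (x (k + 1)))
    (hY : ∀ k, IsYSweep N a b γ ls (x k) (y k))
    (h01 : ∀ i, 1 ≤ i → i ≤ N → x 0 i ≤ x 1 i) (k : ℕ) :
    ∀ i, 1 ≤ i → i ≤ N → x k i ≤ x (k + 1) i := by
  induction k with
  | zero => exact h01
  | succ k ih => exact (hX k).mono (hX (k + 1)) ha hb hγ ((hY k).anti (hY (k + 1)) ha hb hγ ih)

theorem sweep_iterates_tendsto (hN : 1 ≤ N) (ha : 0 < a) (hb : 0 ≤ b) (hγ : 0 ≤ γ)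
    (hlb : 0 ≤ lb) (hls : 0 ≤ ls)
    (hX : ∀ k, IsXSweep N a b γ lb (y k) (x (k + 1)))
    (hY : ∀ k, IsYSweep N a b γ ls (x k) (y k))
    (hx0 : ∀ i, 1 ≤ i → i ≤ N → x 0 i = 0) :
    (∀ k i, 1 ≤ i → i ≤ N →
      x k i ≤ x (k + 1) i ∧ x k i ≤ (b / a) ^ (i - 1) * (lb / a) ∧
        y (k + 1) i ≤ y k i ∧ 0 ≤ y k i) ∧
    ∃ x' y' : ℕ → ℝ,
      (∀ i, 1 ≤ i → i ≤ N →
        Tendsto (x · i) atTop (𝓝 (x' i)) ∧ Tendsto (y · i) atTop (𝓝 (y' i))) ∧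
      IsXSweep N a b γ lb y' x' ∧ IsYSweep N a b γ ls x' y' := by
  have hxnn : ∀ k i, 1 ≤ i → i ≤ N → 0 ≤ x k i := by
    rintro (_ | k) i hi hiN
    exacts [(hx0 i hi hiN).ge, (hX k).nonneg ha hb hγ hlb i hi hiN]
  have hynn k := (hY k).nonneg ha hb hγ hls
  have hxmono := sweep_iterates_mono ha hb hγ hX hY fun i hi hiN ↦
    (hx0 i hi hiN).trans_le (hxnn 1 i hi hiN)
  have hyanti k := (hY k).anti (hY (k + 1)) ha hb hγ (hxmono k)
  have hxle : ∀ k i, 1 ≤ i → i ≤ N → x k i ≤ (b / a) ^ (i - 1) * (lb / a) := by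
    rintro (_ | k) i hi hiN
    · rw [hx0 i hi hiN]; positivity
    · exact (hX k).le_geom ha hb hγ (hxnn (k + 1)) (hynn k) i hi hiN
  have hxt : ∀ i, 1 ≤ i → i ≤ N → Tendsto (x · i) atTop (𝓝 (⨆ k, x k i)) := fun i hi hiN ↦
    tendsto_atTop_ciSup (monotone_nat_of_le_succ fun k ↦ hxmono k i hi hiN)
      ⟨_, Set.forall_mem_range.2 fun k ↦ hxle k i hi hiN⟩
  have hyt : ∀ i, 1 ≤ i → i ≤ N → Tendsto (y · i) atTop (𝓝 (⨅ k, y k i)) := fun i hi hiN ↦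
    tendsto_atTop_ciInf (antitone_nat_of_succ_le fun k ↦ hyanti k i hi hiN)
      ⟨0, Set.forall_mem_range.2 fun k ↦ hynn k i hi hiN⟩
  refine ⟨fun k i hi hiN ↦ ⟨hxmono k i hi hiN, hxle k i hi hiN, hyanti k i hi hiN,
    hynn k i hi hiN⟩, _, _, fun i hi hiN ↦ ⟨hxt i hi hiN, hyt i hi hiN⟩, ?_,
    IsYSweep.of_tendsto hN hxt hyt hY⟩
  exact IsXSweep.of_tendsto hN (fun i hi hiN ↦ (hxt i hi hiN).comp (tendsto_add_atTop_nat 1))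
    hyt hX

end Iterates

end Sweeps

theorem stmt_11 (N : ℕ) (hN : 1 ≤ N) (αQ αM γ lb ls : ℝ)
    (hαQ : 0 < αQ) (hαM : 0 < αM) (hγ : 0 < γ) (hlb : 0 < lb) (hls : 0 < ls)
    (x y : ℕ → ℕ → ℝ)
    (hx0 : ∀ i, 1 ≤ i → i ≤ N → x 0 i = 0)
    (hy0N : y 0 N = ls / (αQ + αM))
    (hy0 : ∀ i, 1 ≤ i → i < N → αM * y 0 (i + 1) = (αQ + αM) * y 0 i)
    (hxk1 : ∀ k, 1 ≤ k →
      lb = (αQ + αM) * x k 1 + γ * min (x k 1) (y (k - 1) 1))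
    (hxki : ∀ k, 1 ≤ k → ∀ i, 2 ≤ i → i ≤ N →
      αM * x k (i - 1) = (αQ + αM) * x k i + γ * min (x k i) (y (k - 1) i))
    (hyki : ∀ k, 1 ≤ k → ∀ i, 1 ≤ i → i < N →
      αM * y k (i + 1) = (αQ + αM) * y k i + γ * min (x k i) (y k i))
    (hykN : ∀ k, 1 ≤ k →
      ls = (αQ + αM) * y k N + γ * min (x k N) (y k N)) :
    (∀ k, ∀ i, 1 ≤ i → i ≤ N →
      x k i ≤ x (k + 1) i ∧
      x k i ≤ (αM / (αQ + αM)) ^ (i - 1) * (lb / (αQ + αM)) ∧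
      y (k + 1) i ≤ y k i ∧ 0 ≤ y k i) ∧
    ∃ x' y' : ℕ → ℝ,
      (∀ i, 1 ≤ i → i ≤ N →
        Filter.Tendsto (fun k => x k i) Filter.atTop (nhds (x' i)) ∧
        Filter.Tendsto (fun k => y k i) Filter.atTop (nhds (y' i))) ∧
      lb = (αQ + αM) * x' 1 + γ * min (x' 1) (y' 1) ∧
      (∀ i, 2 ≤ i → i ≤ N →
        αM * x' (i - 1) = (αQ + αM) * x' i + γ * min (x' i) (y' i)) ∧
      (∀ i, 1 ≤ i → i < N →
        αM * y' (i + 1) = (αQ + αM) * y' i + γ * min (x' i) (y' i)) ∧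
      ls = (αQ + αM) * y' N + γ * min (x' N) (y' N) := by
  have ha : 0 < αQ + αM := add_pos hαQ hαM
  have hX : ∀ k, IsXSweep N (αQ + αM) αM γ lb (y k) (x (k + 1)) := fun k ↦
    ⟨by simpa using hxk1 (k + 1) le_add_self,
      fun i hi hiN ↦ by simpa using hxki (k + 1) le_add_self i hi hiN⟩
  have hY : ∀ k, IsYSweep N (αQ + αM) αM γ ls (x k) (y k)
    | 0 => isYSweep_of_eq_zero hN ha hαM.le hls.le hx0 hy0N hy0
    | k + 1 => ⟨hyki (k + 1) le_add_self, hykN (k + 1) le_add_self⟩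
  obtain ⟨hbounds, x', y', hlim, ⟨hx1', hxi'⟩, ⟨hyi', hyN'⟩⟩ :=
    sweep_iterates_tendsto hN ha hαM.le hγ.le hlb.le hls.le hX hY hx0
  exact ⟨hbounds, x', y', hlim, hx1', hxi', hyi', hyN'⟩
end

section
/- Let α_Q, α_M, γ > 0, λ > 0, N ≥ 1, and let y, y' ∈ ℝ^N be nonnegative vectors with y_i ≤ y'_i for all i. Let x solve λ = (α_Q+α_M)x_1 + γ min(x_1,y_1) and α_M x_{i-1} = (α_Q+α_M)x_i + γ min(x_i,y_i) for 1 < i ≤ N, and let x' solve the same system with y replaced by y'. Then x_i ≥ x'_i for all i. -/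
lemma le_of_mul_add_mul_min_le {A γ t t' s s' : ℝ} (hA : 0 < A) (hγ : 0 ≤ γ) (hs : s ≤ s')
    (h : A * t' + γ * min t' s' ≤ A * t + γ * min t s) : t' ≤ t := by
  by_contra! htt'
  have hmin : γ * min t s ≤ γ * min t' s' :=
    mul_le_mul_of_nonneg_left (min_le_min htt'.le hs) hγ
  nlinarith

theorem stmt_13_general (N : ℕ) (αQ αM γ lam : ℝ)
    (hαQ : 0 < αQ) (hαM : 0 < αM) (hγ : 0 < γ)
    (y y' x x' : ℕ → ℝ)
    (hle : ∀ i, 1 ≤ i → i ≤ N → y i ≤ y' i)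
    (hx1 : lam = (αQ + αM) * x 1 + γ * min (x 1) (y 1))
    (hxi : ∀ i, 2 ≤ i → i ≤ N →
      αM * x (i - 1) = (αQ + αM) * x i + γ * min (x i) (y i))
    (hx1' : lam = (αQ + αM) * x' 1 + γ * min (x' 1) (y' 1))
    (hxi' : ∀ i, 2 ≤ i → i ≤ N →
      αM * x' (i - 1) = (αQ + αM) * x' i + γ * min (x' i) (y' i)) :
    ∀ i, 1 ≤ i → i ≤ N → x' i ≤ x i := by
  have hA : 0 < αQ + αM := by positivity
  intro i hi
  induction i, hi using Nat.le_induction with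
  | base =>
    intro h1N
    exact le_of_mul_add_mul_min_le hA hγ.le (hle 1 le_rfl h1N) (by rw [← hx1, ← hx1'])
  | succ n hn ih =>
    intro hnN
    have hrec := hxi (n + 1) (by omega) hnN
    have hrec' := hxi' (n + 1) (by omega) hnN
    rw [Nat.add_sub_cancel] at hrec hrec'
    refine le_of_mul_add_mul_min_le hA hγ.le (hle (n + 1) (by omega) hnN) ?_
    rw [← hrec, ← hrec']
    exact mul_le_mul_of_nonneg_left (ih (by omega)) hαM.le

theorem stmt_13 (N : ℕ) (hN : 1 ≤ N) (αQ αM γ lam : ℝ)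
    (hαQ : 0 < αQ) (hαM : 0 < αM) (hγ : 0 < γ) (hl : 0 < lam)
    (y y' x x' : ℕ → ℝ)
    (hy : ∀ i, 1 ≤ i → i ≤ N → 0 ≤ y i)
    (hy' : ∀ i, 1 ≤ i → i ≤ N → 0 ≤ y' i)
    (hle : ∀ i, 1 ≤ i → i ≤ N → y i ≤ y' i)
    (hx1 : lam = (αQ + αM) * x 1 + γ * min (x 1) (y 1))
    (hxi : ∀ i, 2 ≤ i → i ≤ N →
      αM * x (i - 1) = (αQ + αM) * x i + γ * min (x i) (y i))
    (hx1' : lam = (αQ + αM) * x' 1 + γ * min (x' 1) (y' 1))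
    (hxi' : ∀ i, 2 ≤ i → i ≤ N →
      αM * x' (i - 1) = (αQ + αM) * x' i + γ * min (x' i) (y' i)) :
    ∀ i, 1 ≤ i → i ≤ N → x' i ≤ x i :=
  stmt_13_general N αQ αM γ lam hαQ hαM hγ y y' x x' hle hx1 hxi hx1' hxi'
end

section
/- Let α_Q, α_M, γ, λ_b, λ_s > 0 with λ_b = λ_s = λ, and let (x*, y*) be the positive solution of the fixed-point system (6). Then by symmetry x*_i = y*_{N+1−i} for all 1 ≤ i ≤ N. In particular, if N is even with N = 2m, then x*_i > y*_i for i ≤ m and x*_i < y*_i for i > m. -/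
/-!
Let `(x, y)` and `(x', y')` solve system (6) with the same parameters and put `u = x - x'`,
`v = y - y'`, extended by `u 0 = v (N + 1) = 0` (both solutions share the ghost values
`λ_b / α_M` and `λ_s / α_M`). Row `i` of the differenced system reads
`α_M u_{i-1} = (α_Q + α_M) u_i + γ t_i` and `α_M v_{i+1} = (α_Q + α_M) v_i + γ t_i` with the
same `t_i = min (x_i, y_i) - min (x'_i, y'_i)`. When `u_i, v_i` have the same sign, so does
`t_i`; otherwise subtracting the two rows cancels `t_i`. Either way
`(α_Q + α_M) (|u_i| + |v_i|) ≤ α_M (|u_{i-1}| + |v_{i+1}|)`, and summing over `i` leaves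
`α_Q ∑ (|u_i| + |v_i|) ≤ 0`: the fixed point is unique. The reflection
`(x_i, y_i) ↦ (y_{N+1-i}, x_{N+1-i})` maps solutions to solutions with `λ_b` and `λ_s`
exchanged, so for `λ_b = λ_s` the solution is symmetric, and the sign pattern of `x - y` is
read off from `y` being increasing.
-/

open Finset

/-- System (6), with `lamB`, `lamS` standing for `λ_b`, `λ_s`. -/
structure IsLOBFixedPoint_s15 (N : ℕ) (αQ αM γ lamB lamS : ℝ) (x y : ℕ → ℝ) : Prop where
  x_one : lamB = (αQ + αM) * x 1 + γ * min (x 1) (y 1)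
  x_rec : ∀ i, 2 ≤ i → i ≤ N → αM * x (i - 1) = (αQ + αM) * x i + γ * min (x i) (y i)
  y_rec : ∀ i, 1 ≤ i → i < N → αM * y (i + 1) = (αQ + αM) * y i + γ * min (x i) (y i)
  y_last : lamS = (αQ + αM) * y N + γ * min (x N) (y N)

theorem mul_abs_add_abs_le_of_common_forcing {c d γ a a' b b' t : ℝ} (hd : 0 ≤ d) (hγ : 0 ≤ γ)
    (hb : d * b = c * a + γ * t) (hb' : d * b' = c * a' + γ * t)
    (hpos : 0 ≤ a → 0 ≤ a' → 0 ≤ t) (hneg : a ≤ 0 → a' ≤ 0 → t ≤ 0) :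
    c * (|a| + |a'|) ≤ d * (|b| + |b'|) := by
  have hdb := mul_le_mul_of_nonneg_left (le_abs_self b) hd
  have hdb' := mul_le_mul_of_nonneg_left (le_abs_self b') hd
  have hdnb := mul_le_mul_of_nonneg_left (neg_le_abs b) hd
  have hdnb' := mul_le_mul_of_nonneg_left (neg_le_abs b') hd
  rcases le_total 0 a with ha | ha <;> rcases le_total 0 a' with ha' | ha'
  · rw [abs_of_nonneg ha, abs_of_nonneg ha']
    nlinarith [hpos ha ha']
  · rw [abs_of_nonneg ha, abs_of_nonpos ha']
    linarith
  · rw [abs_of_nonpos ha, abs_of_nonneg ha']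
    linarith
  · rw [abs_of_nonpos ha, abs_of_nonpos ha']
    nlinarith [hneg ha ha']

theorem eq_zero_of_mul_abs_add_abs_le {N : ℕ} {c d : ℝ} (hdc : d < c) (hd : 0 ≤ d)
    {u v : ℕ → ℝ} (hu : u 0 = 0) (hv : v (N + 1) = 0)
    (h : ∀ k < N, c * (|u (k + 1)| + |v (k + 1)|) ≤ d * (|u k| + |v (k + 2)|)) :
    ∀ k < N, u (k + 1) = 0 ∧ v (k + 1) = 0 := by
  set S := ∑ k ∈ range N, (|u (k + 1)| + |v (k + 1)|)
  have hshift : ∑ k ∈ range N, (|u k| + |v (k + 2)|) ≤ S := by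
    have hu₁ := sum_range_succ' (fun k => |u k|) N
    have hu₂ := sum_range_succ (fun k => |u k|) N
    have hv₁ := sum_range_succ' (fun k => |v (k + 1)|) N
    have hv₂ := sum_range_succ (fun k => |v (k + 1)|) N
    simp only [hu, hv, abs_zero, add_zero] at hu₁ hu₂ hv₁ hv₂
    simp only [S, sum_add_distrib]
    linarith [abs_nonneg (u N), abs_nonneg (v 1)]
  have hS : c * S ≤ d * S := calc
    c * S = ∑ k ∈ range N, c * (|u (k + 1)| + |v (k + 1)|) := mul_sum _ _ _
    _ ≤ ∑ k ∈ range N, d * (|u k| + |v (k + 2)|) :=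
        sum_le_sum fun k hk => h k (mem_range.1 hk)
    _ = d * ∑ k ∈ range N, (|u k| + |v (k + 2)|) := (mul_sum _ _ _).symm
    _ ≤ d * S := mul_le_mul_of_nonneg_left hshift hd
  have hterm_nonneg : ∀ k ∈ range N, 0 ≤ |u (k + 1)| + |v (k + 1)| := fun k _ => by positivity
  have hS_zero : S = 0 :=
    le_antisymm (by nlinarith [sum_nonneg hterm_nonneg]) (sum_nonneg hterm_nonneg)
  intro k hk
  have hk_zero := (sum_eq_zero_iff_of_nonneg hterm_nonneg).1 hS_zero k (mem_range.2 hk)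
  obtain ⟨huk, hvk⟩ := (add_eq_zero_iff_of_nonneg (abs_nonneg _) (abs_nonneg _)).1 hk_zero
  exact ⟨abs_eq_zero.1 huk, abs_eq_zero.1 hvk⟩

namespace IsLOBFixedPoint_s15

variable {N : ℕ} {αQ αM γ lamB lamS : ℝ} {x y : ℕ → ℝ}

theorem reflect (h : IsLOBFixedPoint_s15 N αQ αM γ lamB lamS x y) :
    IsLOBFixedPoint_s15 N αQ αM γ lamS lamB (fun i => y (N + 1 - i)) (fun i => x (N + 1 - i)) where
  x_one := by
    rw [Nat.add_sub_cancel, min_comm]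
    exact h.y_last
  x_rec i hi hiN := by
    have hy := h.y_rec (N + 1 - i) (by omega) (by omega)
    rw [show N + 1 - i + 1 = N + 1 - (i - 1) by omega, min_comm] at hy
    exact hy
  y_rec i hi hiN := by
    have hx := h.x_rec (N + 1 - i) (by omega) (by omega)
    rw [show N + 1 - i - 1 = N + 1 - (i + 1) by omega, min_comm] at hx
    exact hx
  y_last := by
    rw [Nat.add_sub_cancel_left, min_comm]
    exact h.x_one

theorem unique {x' y' : ℕ → ℝ} (hαQ : 0 < αQ) (hαM : 0 ≤ αM) (hγ : 0 ≤ γ)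
    (h : IsLOBFixedPoint_s15 N αQ αM γ lamB lamS x y)
    (h' : IsLOBFixedPoint_s15 N αQ αM γ lamB lamS x' y') :
    ∀ i, 1 ≤ i → i ≤ N → x i = x' i ∧ y i = y' i := by
  set u : ℕ → ℝ := fun k => if k = 0 then 0 else x k - x' k
  set v : ℕ → ℝ := fun k => if k = N + 1 then 0 else y k - y' k
  set t : ℕ → ℝ := fun k => min (x k) (y k) - min (x' k) (y' k)
  have hu : ∀ k < N, αM * u k = (αQ + αM) * u (k + 1) + γ * t (k + 1) := by
    intro k hk
    rcases Nat.eq_zero_or_pos k with rfl | hk0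
    · simp only [u, t, zero_add, one_ne_zero, ↓reduceIte]
      linarith [h.x_one, h'.x_one]
    · have hx := h.x_rec (k + 1) (by omega) (by omega)
      have hx' := h'.x_rec (k + 1) (by omega) (by omega)
      simp only [Nat.add_sub_cancel] at hx hx'
      simp only [u, t, if_neg hk0.ne', if_neg k.succ_ne_zero]
      linarith
  have hv : ∀ k < N, αM * v (k + 2) = (αQ + αM) * v (k + 1) + γ * t (k + 1) := by
    intro k hk
    have hk1 : k + 1 ≠ N + 1 := by omega
    rcases eq_or_lt_of_le (Nat.succ_le_of_lt hk) with hkN | hkN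
    · subst hkN
      simp only [v, t, if_pos, if_neg hk1]
      linarith [h.y_last, h'.y_last]
    · have hy := h.y_rec (k + 1) (by omega) hkN
      have hy' := h'.y_rec (k + 1) (by omega) hkN
      simp only [v, t, if_neg hk1, if_neg (show k + 2 ≠ N + 1 by omega)]
      linarith
  have hcontract : ∀ k < N,
      (αQ + αM) * (|u (k + 1)| + |v (k + 1)|) ≤ αM * (|u k| + |v (k + 2)|) := by
    intro k hk
    have hu₁ : u (k + 1) = x (k + 1) - x' (k + 1) := if_neg k.succ_ne_zero
    have hv₁ : v (k + 1) = y (k + 1) - y' (k + 1) := if_neg (by omega)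
    refine mul_abs_add_abs_le_of_common_forcing hαM hγ (hu k hk) (hv k hk) ?_ ?_
    · rw [hu₁, hv₁]
      intro hxk hyk
      exact sub_nonneg.2 (min_le_min (by linarith) (by linarith))
    · rw [hu₁, hv₁]
      intro hxk hyk
      exact sub_nonpos.2 (min_le_min (by linarith) (by linarith))
  have hzero := eq_zero_of_mul_abs_add_abs_le (by linarith) hαM (by simp [u]) (by simp [v])
    hcontract
  intro i hi hiN
  obtain ⟨k, rfl⟩ : ∃ k, i = k + 1 := ⟨i - 1, by omega⟩
  obtain ⟨huk, hvk⟩ := hzero k (by omega)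
  simp only [u, v, if_neg k.succ_ne_zero, if_neg (show k + 1 ≠ N + 1 by omega)] at huk hvk
  exact ⟨sub_eq_zero.1 huk, sub_eq_zero.1 hvk⟩

theorem y_strictMonoOn (hαQ : 0 < αQ) (hαM : 0 < αM) (hγ : 0 ≤ γ)
    (hx : ∀ i, 1 ≤ i → i < N → 0 ≤ x i) (hy : ∀ i, 1 ≤ i → i < N → 0 < y i)
    (h : IsLOBFixedPoint_s15 N αQ αM γ lamB lamS x y) :
    StrictMonoOn y (Set.Icc 1 N) := by
  refine strictMonoOn_of_lt_add_one Set.ordConnected_Icc fun i _ hi hi' => ?_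
  have hi1 : 1 ≤ i := hi.1
  have hiN : i < N := Nat.lt_of_succ_le hi'.2
  have hmin : 0 ≤ min (x i) (y i) := le_min (hx i hi1 hiN) (hy i hi1 hiN).le
  have hrec := h.y_rec i hi1 hiN
  have hstep : αM * y i < αM * y (i + 1) := by nlinarith [hy i hi1 hiN]
  exact lt_of_mul_lt_mul_left hstep hαM.le

end IsLOBFixedPoint_s15

theorem stmt_15_general (N : ℕ) (αQ αM γ lam : ℝ)
    (hαQ : 0 < αQ) (hαM : 0 < αM) (hγ : 0 < γ)
    (x y : ℕ → ℝ)
    (hx : ∀ i, 1 ≤ i → i ≤ N → 0 < x i)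
    (hy : ∀ i, 1 ≤ i → i ≤ N → 0 < y i)
    (h1 : lam = (αQ + αM) * x 1 + γ * min (x 1) (y 1))
    (h2 : ∀ i, 2 ≤ i → i ≤ N →
      αM * x (i - 1) = (αQ + αM) * x i + γ * min (x i) (y i))
    (h3 : ∀ i, 1 ≤ i → i < N →
      αM * y (i + 1) = (αQ + αM) * y i + γ * min (x i) (y i))
    (h4 : lam = (αQ + αM) * y N + γ * min (x N) (y N)) :
    (∀ i, 1 ≤ i → i ≤ N → x i = y (N + 1 - i)) ∧
    (∀ m, N = 2 * m →
      (∀ i, 1 ≤ i → i ≤ m → y i < x i) ∧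
      (∀ i, m < i → i ≤ N → x i < y i)) := by
  have hfp : IsLOBFixedPoint_s15 N αQ αM γ lam lam x y := ⟨h1, h2, h3, h4⟩
  have hsymm : ∀ i, 1 ≤ i → i ≤ N → x i = y (N + 1 - i) := fun i hi hiN =>
    (hfp.unique hαQ hαM.le hγ.le hfp.reflect i hi hiN).1
  have hmono := hfp.y_strictMonoOn hαQ hαM hγ.le (fun i hi hiN => (hx i hi hiN.le).le)
    (fun i hi hiN => hy i hi hiN.le)
  refine ⟨hsymm, fun m hm => ⟨fun i hi him => ?_, fun i hmi hiN => ?_⟩⟩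
  · rw [hsymm i hi (by omega)]
    exact hmono ⟨hi, by omega⟩ ⟨by omega, by omega⟩ (by omega)
  · rw [hsymm i (by omega) hiN]
    exact hmono ⟨by omega, by omega⟩ ⟨by omega, hiN⟩ (by omega)

theorem stmt_15 (N : ℕ) (hN : 1 ≤ N) (αQ αM γ lam : ℝ)
    (hαQ : 0 < αQ) (hαM : 0 < αM) (hγ : 0 < γ) (hlam : 0 < lam)
    (x y : ℕ → ℝ)
    (hx : ∀ i, 1 ≤ i → i ≤ N → 0 < x i)
    (hy : ∀ i, 1 ≤ i → i ≤ N → 0 < y i)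
    (h1 : lam = (αQ + αM) * x 1 + γ * min (x 1) (y 1))
    (h2 : ∀ i, 2 ≤ i → i ≤ N →
      αM * x (i - 1) = (αQ + αM) * x i + γ * min (x i) (y i))
    (h3 : ∀ i, 1 ≤ i → i < N →
      αM * y (i + 1) = (αQ + αM) * y i + γ * min (x i) (y i))
    (h4 : lam = (αQ + αM) * y N + γ * min (x N) (y N)) :
    (∀ i, 1 ≤ i → i ≤ N → x i = y (N + 1 - i)) ∧
    (∀ m, N = 2 * m →
      (∀ i, 1 ≤ i → i ≤ m → y i < x i) ∧
      (∀ i, m < i → i ≤ N → x i < y i)) :=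
  stmt_15_general N αQ αM γ lam hαQ hαM hγ x y hx hy h1 h2 h3 h4
end

section
/- Let α_Q, α_M, γ, λ_b, λ_s > 0, and let (x*, y*) be a positive solution of the fixed-point system (6). If x*_N > y*_N (pattern (i) of Lemma 4), then x*_i > y*_i for all 1 ≤ i ≤ N, and consequently x* satisfies the linear recursion α_M x*_{i-1} = (α_Q+α_M)x*_i + γ y*_i for 1 < i ≤ N while y* satisfies α_M y*_{i+1} = (α_Q+α_M+γ)y*_i for 1 ≤ i < N, so that y*_i = (α_M/(α_Q+α_M+γ))^{N-i} y*_N. -/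
/-!
Each equation of the fixed-point system says that `αM` times a neighbouring level equals
`(αQ + αM)` times the current level plus a nonnegative term; as `αQ ≥ 0`, this makes `x`
antitone and `y` monotone in the level index, so `y i ≤ y N < x N ≤ x i`. Hence
`min (x i) (y i) = y i` throughout, the system becomes linear, and the `y`-recursion is
geometric with ratio `αM / (αQ + αM + γ)`.
-/

open Set

theorem le_of_mul_eq_add_mul_add {a b u v w : ℝ} (ha : 0 < a) (hb : 0 ≤ b) (hv : 0 ≤ v)
    (hw : 0 ≤ w) (h : a * u = (b + a) * v + w) : v ≤ u :=
  le_of_mul_le_mul_left (by nlinarith) ha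

theorem eq_pow_sub_mul_of_eq_mul_add_one {M : Type*} [Monoid M] {f : ℕ → M} {r : M} {a N : ℕ}
    (h : ∀ i, a ≤ i → i < N → f i = r * f (i + 1)) {i : ℕ} (hai : a ≤ i) (hiN : i ≤ N) :
    f i = r ^ (N - i) * f N := by
  obtain ⟨k, hk⟩ := Nat.exists_eq_add_of_le hiN
  induction k generalizing i with
  | zero => simp [hk]
  | succ k ih =>
    rw [h i hai (by omega), ih (by omega) (by omega) (by omega),
      show N - i = N - (i + 1) + 1 by omega, pow_succ', mul_assoc]

theorem antitoneOn_Icc_of_mul_sub_one_eq {N : ℕ} {αQ αM γ : ℝ} {x y : ℕ → ℝ}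
    (hαQ : 0 ≤ αQ) (hαM : 0 < αM) (hγ : 0 ≤ γ)
    (hx : ∀ i, 1 ≤ i → i ≤ N → 0 ≤ x i) (hy : ∀ i, 1 ≤ i → i ≤ N → 0 ≤ y i)
    (hrec : ∀ i, 2 ≤ i → i ≤ N → αM * x (i - 1) = (αQ + αM) * x i + γ * min (x i) (y i)) :
    AntitoneOn x (Icc 1 N) := by
  refine antitoneOn_of_add_one_le ordConnected_Icc fun i _ hi hi' => ?_
  have hi1 := hi.1
  have hiN := hi'.2
  have hmin := le_min (hx (i + 1) (by omega) hiN) (hy (i + 1) (by omega) hiN)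
  exact le_of_mul_eq_add_mul_add hαM hαQ (hx _ (by omega) hiN) (mul_nonneg hγ hmin)
    (hrec (i + 1) (by omega) hiN)

theorem monotoneOn_Icc_of_mul_add_one_eq {N : ℕ} {αQ αM γ : ℝ} {x y : ℕ → ℝ}
    (hαQ : 0 ≤ αQ) (hαM : 0 < αM) (hγ : 0 ≤ γ)
    (hx : ∀ i, 1 ≤ i → i ≤ N → 0 ≤ x i) (hy : ∀ i, 1 ≤ i → i ≤ N → 0 ≤ y i)
    (hrec : ∀ i, 1 ≤ i → i < N → αM * y (i + 1) = (αQ + αM) * y i + γ * min (x i) (y i)) :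
    MonotoneOn y (Icc 1 N) := by
  refine monotoneOn_of_le_add_one ordConnected_Icc fun i _ hi hi' => ?_
  have hiN := hi'.2
  have hmin := le_min (hx _ hi.1 hi.2) (hy _ hi.1 hi.2)
  exact le_of_mul_eq_add_mul_add hαM hαQ (hy _ hi.1 hi.2) (mul_nonneg hγ hmin)
    (hrec i hi.1 (by omega))

theorem stmt_17_general (N : ℕ) (αQ αM γ : ℝ)
    (hαQ : 0 < αQ) (hαM : 0 < αM) (hγ : 0 < γ)
    (x y : ℕ → ℝ)
    (hx : ∀ i, 1 ≤ i → i ≤ N → 0 < x i)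
    (hy : ∀ i, 1 ≤ i → i ≤ N → 0 < y i)
    (h2 : ∀ i, 2 ≤ i → i ≤ N →
      αM * x (i - 1) = (αQ + αM) * x i + γ * min (x i) (y i))
    (h3 : ∀ i, 1 ≤ i → i < N →
      αM * y (i + 1) = (αQ + αM) * y i + γ * min (x i) (y i))
    (hNN : y N < x N) :
    (∀ i, 1 ≤ i → i ≤ N → y i < x i) ∧
    (∀ i, 2 ≤ i → i ≤ N → αM * x (i - 1) = (αQ + αM) * x i + γ * y i) ∧
    (∀ i, 1 ≤ i → i < N → αM * y (i + 1) = (αQ + αM + γ) * y i) ∧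
    (∀ i, 1 ≤ i → i ≤ N →
      y i = (αM / (αQ + αM + γ)) ^ (N - i) * y N) := by
  have hx₀ i hi hiN := (hx i hi hiN).le
  have hy₀ i hi hiN := (hy i hi hiN).le
  have hxa := antitoneOn_Icc_of_mul_sub_one_eq hαQ.le hαM hγ.le hx₀ hy₀ h2
  have hym := monotoneOn_Icc_of_mul_add_one_eq hαQ.le hαM hγ.le hx₀ hy₀ h3
  have hlt : ∀ i, 1 ≤ i → i ≤ N → y i < x i := fun i hi hiN =>
    have hiI : i ∈ Icc 1 N := ⟨hi, hiN⟩
    have hNI : N ∈ Icc 1 N := ⟨hi.trans hiN, le_rfl⟩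
    calc y i ≤ y N := hym hiI hNI hiN
      _ < x N := hNN
      _ ≤ x i := hxa hiI hNI hiN
  have hmin i hi hiN : min (x i) (y i) = y i := min_eq_right (hlt i hi hiN).le
  have hx_rec : ∀ i, 2 ≤ i → i ≤ N → αM * x (i - 1) = (αQ + αM) * x i + γ * y i :=
    fun i hi hiN => by rw [h2 i hi hiN, hmin i (by omega) hiN]
  have hy_rec : ∀ i, 1 ≤ i → i < N → αM * y (i + 1) = (αQ + αM + γ) * y i :=
    fun i hi hiN => by rw [h3 i hi hiN, hmin i hi hiN.le]; ring
  refine ⟨hlt, hx_rec, hy_rec, fun i hi hiN => eq_pow_sub_mul_of_eq_mul_add_one ?_ hi hiN⟩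
  intro j hj hjN
  rw [div_mul_eq_mul_div, eq_div_iff (by positivity), hy_rec j hj hjN, mul_comm]

theorem stmt_17 (N : ℕ) (hN : 1 ≤ N) (αQ αM γ lb ls : ℝ)
    (hαQ : 0 < αQ) (hαM : 0 < αM) (hγ : 0 < γ) (hlb : 0 < lb) (hls : 0 < ls)
    (x y : ℕ → ℝ)
    (hx : ∀ i, 1 ≤ i → i ≤ N → 0 < x i)
    (hy : ∀ i, 1 ≤ i → i ≤ N → 0 < y i)
    (h1 : lb = (αQ + αM) * x 1 + γ * min (x 1) (y 1))
    (h2 : ∀ i, 2 ≤ i → i ≤ N →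
      αM * x (i - 1) = (αQ + αM) * x i + γ * min (x i) (y i))
    (h3 : ∀ i, 1 ≤ i → i < N →
      αM * y (i + 1) = (αQ + αM) * y i + γ * min (x i) (y i))
    (h4 : ls = (αQ + αM) * y N + γ * min (x N) (y N))
    (hNN : y N < x N) :
    (∀ i, 1 ≤ i → i ≤ N → y i < x i) ∧
    (∀ i, 2 ≤ i → i ≤ N → αM * x (i - 1) = (αQ + αM) * x i + γ * y i) ∧
    (∀ i, 1 ≤ i → i < N → αM * y (i + 1) = (αQ + αM + γ) * y i) ∧
    (∀ i, 1 ≤ i → i ≤ N →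
      y i = (αM / (αQ + αM + γ)) ^ (N - i) * y N) :=
  stmt_17_general N αQ αM γ hαQ hαM hγ x y hx hy h2 h3 hNN
end
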